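/- arXiv:1908.03027 — 2 statements merged into one kernel-verified Lean document; each statement's English description precedes it below -/
import Mathlib

section
/- Let 𝕋 = {z ∈ ℂ : |z| = 1} be the unit circle and let S be the linear span of the constant function 1 and the identity function z ↦ z inside C(𝕋). Then the Choquet boundary of S equals all of 𝕋. -/
/-- The evaluation functional at a point, as an element of the dual of a subspace of `C(X, ℂ)`. -/
noncomputable def evalDual {X : Type*} [TopologicalSpace X] [CompactSpace X]
    (S : Submodule ℂ C(X, ℂ)) (x : X) : StrongDual ℂ ↥S :=
  LinearMap.mkContinuous
    { toFun := fun f => (f : C(X, ℂ)) x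
      map_add' := fun f g => rfl
      map_smul' := fun c f => rfl }
    1
    (fun f => by
      exact le_of_le_of_eq (ContinuousMap.norm_coe_le_norm (f : C(X, ℂ)) x) (one_mul _).symm)

/-- The Choquet boundary of a subspace `S` of `C(X, ℂ)`: the set of points `x ∈ X` such that
the evaluation functional at `x` is an extreme point of the closed unit ball of the dual of `S`. -/
noncomputable def ChoquetBoundary {X : Type*} [TopologicalSpace X] [CompactSpace X]
    (S : Submodule ℂ C(X, ℂ)) : Set X :=
  {x | evalDual S x ∈ Set.extremePoints ℝ (Metric.closedBall (0 : StrongDual ℂ ↥S) 1)}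

/-!
If `‖h‖ ≤ 1` and `|h x| = 1`, then `f = (1 + conj (h x) • h) / 2` lies in the unit ball of
`span {1, h}` and `f x = 1`. A functional `φ` of norm at most `1` with `Re (φ f) ≥ 1` must have
`φ 1 = 1` and `conj (h x) * φ h = 1`, because `1` is the only point of the closed unit disc with
real part at least `1`; hence `φ = δ_x`. So `Re (· f)` exposes `δ_x` in the dual unit ball, and
exposed points are extreme. On the circle, take `h = z`.
-/

namespace Complex

theorem eq_one_of_one_le_re {w : ℂ} (hw : ‖w‖ ≤ 1) (h : 1 ≤ w.re) : w = 1 := by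
  have hre : w.re = ‖w‖ := le_antisymm (re_le_norm w) (hw.trans h)
  have him : w.im = 0 := abs_re_eq_norm.mp (by rw [abs_of_pos (by linarith), hre])
  exact ext (by rw [one_re]; linarith) him

theorem eq_one_of_add_eq_two {a b : ℂ} (ha : ‖a‖ ≤ 1) (hb : ‖b‖ ≤ 1) (h : a + b = 2) :
    a = 1 ∧ b = 1 := by
  have hre : a.re + b.re = 2 := by simpa using congrArg re h
  have ha' := (re_le_norm a).trans ha
  have hb' := (re_le_norm b).trans hb
  exact ⟨eq_one_of_one_le_re ha (by linarith), eq_one_of_one_le_re hb (by linarith)⟩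

end Complex

theorem ContinuousLinearMap.ext_on_span {R M N : Type*} [Semiring R] [AddCommMonoid M] [Module R M]
    [TopologicalSpace M] [AddCommMonoid N] [Module R N] [TopologicalSpace N] {s : Set M}
    {f g : Submodule.span R s →L[R] N}
    (h : ∀ x (hx : x ∈ s), f ⟨x, Submodule.subset_span hx⟩ = g ⟨x, Submodule.subset_span hx⟩) :
    f = g :=
  coe_injective <| LinearMap.ext_on Submodule.span_span_coe_preimage fun x hx => h x hx

theorem mem_exposedPoints_closedBall_of_unique_norming {E : Type*} [SeminormedAddCommGroup E]
    [NormedSpace ℂ E] {φ₀ : StrongDual ℂ E} (hφ₀ : ‖φ₀‖ ≤ 1) {f : E} (hf : ‖f‖ ≤ 1)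
    (hφ₀f : φ₀ f = 1) (huniq : ∀ φ : StrongDual ℂ E, ‖φ‖ ≤ 1 → φ f = 1 → φ = φ₀) :
    φ₀ ∈ Set.exposedPoints ℝ (Metric.closedBall (0 : StrongDual ℂ E) 1) := by
  have hball : ∀ φ : StrongDual ℂ E, φ ∈ Metric.closedBall 0 1 → ‖φ f‖ ≤ 1 := fun φ hφ =>
    (φ.le_of_opNorm_le_of_le (mem_closedBall_zero_iff.mp hφ) hf).trans_eq (one_mul 1)
  refine ⟨mem_closedBall_zero_iff.mpr hφ₀,
    Complex.reCLM.comp ((ContinuousLinearMap.apply ℂ ℂ f).restrictScalars ℝ), fun φ hφ => ?_⟩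
  simp only [ContinuousLinearMap.comp_apply, ContinuousLinearMap.coe_restrictScalars',
    ContinuousLinearMap.apply_apply, Complex.reCLM_apply, hφ₀f, Complex.one_re]
  exact ⟨(Complex.re_le_norm _).trans (hball φ hφ), fun h =>
    huniq φ (mem_closedBall_zero_iff.mp hφ) (Complex.eq_one_of_one_le_re (hball φ hφ) h)⟩

section SpanOneFunction

open ComplexConjugate

variable {X : Type*} [TopologicalSpace X] [CompactSpace X]

@[simp]
theorem evalDual_apply (S : Submodule ℂ C(X, ℂ)) (x : X) (f : S) :
    evalDual S x f = (f : C(X, ℂ)) x :=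
  rfl

theorem norm_evalDual_le_one (S : Submodule ℂ C(X, ℂ)) (x : X) : ‖evalDual S x‖ ≤ 1 :=
  LinearMap.mkContinuous_norm_le _ zero_le_one _

theorem mem_choquetBoundary_span_one_of_norm_apply_eq_one {h : C(X, ℂ)} (hh : ‖h‖ ≤ 1) {x : X}
    (hx : ‖h x‖ = 1) : x ∈ ChoquetBoundary (Submodule.span ℂ {1, h}) := by
  set S := Submodule.span ℂ {1, h}
  let one : S := ⟨1, Submodule.subset_span (by simp)⟩
  let hS : S := ⟨h, Submodule.subset_span (by simp)⟩
  let f : S := (1 / 2 : ℂ) • (one + conj (h x) • hS)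
  have hconj : conj (h x) * h x = 1 := by rw [Complex.conj_mul', hx]; norm_num
  have hone : ‖one‖ ≤ 1 := (ContinuousMap.norm_le _ zero_le_one).mpr fun _ => by
    simp [one]
  have hhS : ‖conj (h x) • hS‖ ≤ 1 := by
    rw [norm_smul, RCLike.norm_conj, hx, one_mul]
    exact hh
  have hf : ‖f‖ ≤ 1 := by
    rw [norm_smul]
    calc ‖(1 / 2 : ℂ)‖ * ‖one + conj (h x) • hS‖ ≤ 1 / 2 * (1 + 1) := by
          rw [norm_div, norm_one, Complex.norm_two]
          gcongr
          exact (norm_add_le _ _).trans (add_le_add hone hhS)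
      _ = 1 := by norm_num
  have hδf : evalDual S x f = 1 := by
    change (1 / 2 : ℂ) * (1 + conj (h x) * h x) = 1
    rw [hconj]
    norm_num
  refine exposedPoints_subset_extremePoints
    (mem_exposedPoints_closedBall_of_unique_norming (norm_evalDual_le_one S x) hf hδf ?_)
  intro φ hφ hφf
  have hsum : φ one + φ (conj (h x) • hS) = 2 := by
    simp only [f, map_smul, map_add, smul_eq_mul] at hφf ⊢
    linear_combination 2 * hφf
  obtain ⟨hφone, hφhS⟩ := Complex.eq_one_of_add_eq_two
    ((φ.le_of_opNorm_le_of_le hφ hone).trans_eq (one_mul 1))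
    ((φ.le_of_opNorm_le_of_le hφ hhS).trans_eq (one_mul 1)) hsum
  rw [map_smul, smul_eq_mul] at hφhS
  refine ContinuousLinearMap.ext_on_span fun g hg => ?_
  rcases hg with hg | hg <;> subst g
  · simpa using hφone
  · simp only [evalDual_apply]
    linear_combination h x * hφhS - φ hS * hconj

end SpanOneFunction

/-- The Choquet boundary of `span {1, z} ⊆ C(𝕋)` is all of the unit circle `𝕋`. -/
theorem choquet_boundary_circle_span :
    ChoquetBoundary (Submodule.span ℂ
      ({1, ⟨fun z => (z : ℂ), continuous_subtype_val⟩} :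
          Set C(↥(Metric.sphere (0 : ℂ) 1), ℂ))) = Set.univ := by
  refine Set.eq_univ_of_forall fun z => mem_choquetBoundary_span_one_of_norm_apply_eq_one ?_ ?_
  · exact (ContinuousMap.norm_le _ zero_le_one).mpr fun w => (mem_sphere_zero_iff_norm.mp w.2).le
  · exact mem_sphere_zero_iff_norm.mp z.2
end

section
/- Let D = {z ∈ ℂ : |z| ≤ 1} be the closed unit disc and let {T_n} be a sequence of positive linear maps from C(D) into C(D) such that T_n 1 → 1, T_n z → z, and T_n |z|² → |z|² uniformly on D (where z denotes the identity function w ↦ w and |z|² the function w ↦ |w|²). Then ‖T_n f − f‖ → 0 as n → ∞ for every f ∈ C(D). -/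
open Filter Topology

instance : CompactSpace ↥(Metric.closedBall (0 : ℂ) 1) :=
  isCompact_iff_compactSpace.mp (isCompact_closedBall _ _)

/-- The identity function `z : w ↦ w` as an element of `C(D, ℂ)`, where `D` is the closed
unit disc. -/
def discIdFun : C(↥(Metric.closedBall (0 : ℂ) 1), ℂ) :=
  ⟨fun z => (z : ℂ), continuous_subtype_val⟩

/-- The function `|z|² : w ↦ |w|²` as an element of `C(D, ℂ)`. -/
noncomputable def discAbsSqFun : C(↥(Metric.closedBall (0 : ℂ) 1), ℂ) :=
  ⟨fun z => ((‖(z : ℂ)‖ ^ 2 : ℝ) : ℂ),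
    Complex.continuous_ofReal.comp ((continuous_norm.comp continuous_subtype_val).pow 2)⟩

/-
Positivity is the whole engine. A positive functional `φ` on `C(X, ℂ)` is real on real functions
and monotone there, so `|g z - g w| ≤ ε + K |z - w|²` gives
`|φ g - g(w) φ 1| ≤ ε φ 1 + K φ(|· - w|²)`. On the disc,
`|z - w|² = |z|² - w̄ z - w z̄ + |w|²`, and a positive `φ` commutes with conjugation, so
`φ(|· - w|²)` is controlled by how far `φ` is from evaluation at `w` on `1`, `z` and `|z|²`.
Taking `φ = f ↦ (T_n f)(w)`, uniform continuity of `g` supplies `K` for every `ε`, which proves the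
theorem for real `g`; a complex `f` splits into real and imaginary parts.
-/

open ComplexOrder ComplexStarModule

namespace PositiveLinearMap

variable {X : Type*} [TopologicalSpace X]

theorem abs_sub_mul_map_one_le (ψ : C(X, ℝ) →ₚ[ℝ] ℝ) {g q : C(X, ℝ)} {c ε K : ℝ}
    (h : ∀ z, |g z - c| ≤ ε + K * q z) : |ψ g - c * ψ 1| ≤ ε * ψ 1 + K * ψ q := by
  have hlow := OrderHomClass.mono ψ (show -(ε • 1 + K • q) ≤ g - c • 1 from
    fun z => by simpa using (abs_le.1 (h z)).1)
  have hupp := OrderHomClass.mono ψ (show g - c • 1 ≤ ε • 1 + K • q from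
    fun z => by simpa using (abs_le.1 (h z)).2)
  simp only [map_neg, map_add, map_sub, map_smul, smul_eq_mul] at hlow hupp
  exact abs_le.2 ⟨by linarith, by linarith⟩

noncomputable def realRestrict (φ : C(X, ℂ) →ₚ[ℂ] ℂ) : C(X, ℝ) →ₚ[ℝ] ℝ where
  toFun g := (φ (g.realToRCLike ℂ)).re
  map_add' g h := by
    rw [← Complex.add_re, ← map_add,
      show (g + h).realToRCLike ℂ = g.realToRCLike ℂ + h.realToRCLike ℂ by ext; simp]
  map_smul' r g := by
    rw [show (r • g).realToRCLike ℂ = (r : ℂ) • g.realToRCLike ℂ by ext; simp, map_smul]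
    simp only [smul_eq_mul, Complex.mul_re, Complex.ofReal_re, Complex.ofReal_im, zero_mul,
      sub_zero, RingHom.id_apply]
  monotone' g h hgh :=
    (Complex.le_def.1 (OrderHomClass.mono φ (ContinuousMap.realToRCLike_monotone X ℂ hgh))).1

theorem realRestrict_apply (φ : C(X, ℂ) →ₚ[ℂ] ℂ) (g : C(X, ℝ)) :
    φ.realRestrict g = (φ (g.realToRCLike ℂ)).re := rfl

variable [CompactSpace X]

theorem ofReal_realRestrict_apply (φ : C(X, ℂ) →ₚ[ℂ] ℂ) (g : C(X, ℝ)) :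
    (φ.realRestrict g : ℂ) = φ (g.realToRCLike ℂ) :=
  Complex.conj_eq_iff_re.1 (IsSelfAdjoint.map' (by simp) φ)

theorem norm_apply_realToRCLike_sub_le (φ : C(X, ℂ) →ₚ[ℂ] ℂ) {g q : C(X, ℝ)} {c ε K : ℝ}
    (hε : 0 ≤ ε) (hK : 0 ≤ K) (h : ∀ z, |g z - c| ≤ ε + K * q z) :
    ‖φ (g.realToRCLike ℂ) - c‖ ≤ ε + (ε + |c|) * ‖φ 1 - 1‖ + K * ‖φ (q.realToRCLike ℂ)‖ := by
  set ψ := φ.realRestrict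
  have hone : |ψ 1 - 1| ≤ ‖φ 1 - 1‖ := by
    simpa [ψ, realRestrict_apply, show (1 : C(X, ℝ)).realToRCLike ℂ = 1 by ext; simp] using
      Complex.abs_re_le_norm (φ 1 - 1)
  have hq : ψ q ≤ ‖φ (q.realToRCLike ℂ)‖ := (Complex.re_le_norm _)
  have := ψ.abs_sub_mul_map_one_le h
  rw [← ofReal_realRestrict_apply, ← Complex.ofReal_sub, Complex.norm_real, Real.norm_eq_abs]
  calc |ψ g - c| ≤ |ψ g - c * ψ 1| + |c| * |ψ 1 - 1| := by
        rw [← abs_mul]; exact (abs_sub_le _ (c * ψ 1) _).trans_eq (by ring_nf)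
    _ ≤ ε * ψ 1 + K * ψ q + |c| * ‖φ 1 - 1‖ := by gcongr
    _ ≤ ε * (1 + ‖φ 1 - 1‖) + K * ‖φ (q.realToRCLike ℂ)‖ + |c| * ‖φ 1 - 1‖ := by
        gcongr; linarith [le_abs_self (ψ 1 - 1)]
    _ = _ := by ring

end PositiveLinearMap

theorem ContinuousMap.complex_nonneg_iff {X : Type*} [TopologicalSpace X] {f : C(X, ℂ)} :
    0 ≤ f ↔ ∀ z, (f z).im = 0 ∧ 0 ≤ (f z).re := by
  simp only [ContinuousMap.le_def, ContinuousMap.zero_apply, Complex.nonneg_iff,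
    eq_comm (a := (0 : ℝ)), and_comm]

theorem Filter.Tendsto.of_forall_le_add_mul {ι : Type*} {l : Filter ι} {u e : ι → ℝ}
    (hu : ∀ i, 0 ≤ u i) (he : Tendsto e l (𝓝 0))
    (h : ∀ ε > 0, ∃ C, ∀ i, u i ≤ ε + C * e i) : Tendsto u l (𝓝 0) := by
  refine tendsto_order.2 ⟨fun a ha => .of_forall fun i => ha.trans_le (hu i), fun ε hε => ?_⟩
  obtain ⟨C, hC⟩ := h (ε / 2) (half_pos hε)
  have hCe : Tendsto (fun i => C * e i) l (𝓝 0) := by simpa using he.const_mul C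
  filter_upwards [hCe.eventually_lt_const (half_pos hε)] with i hi
  linarith [hC i]

theorem tendsto_norm_sub_of_forall_isSelfAdjoint {E ι : Type*} [NormedAddCommGroup E]
    [NormedSpace ℂ E] [StarAddMonoid E] [StarModule ℂ E] {l : Filter ι} (T : ι → E →ₗ[ℂ] E)
    (h : ∀ a : E, IsSelfAdjoint a → Tendsto (fun i => ‖T i a - a‖) l (𝓝 0)) (f : E) :
    Tendsto (fun i => ‖T i f - f‖) l (𝓝 0) := by
  have hre := h _ (ℜ f).2
  have him := h _ (ℑ f).2
  refine squeeze_zero (fun _ => norm_nonneg _) (fun i => ?_) (by simpa using hre.add him)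
  conv_lhs => rw [← realPart_add_I_smul_imaginaryPart f]
  rw [map_add, map_smul, add_sub_add_comm, ← smul_sub]
  exact (norm_add_le _ _).trans_eq (by rw [norm_smul, Complex.norm_I, one_mul])

section Metric

variable {X : Type*} [PseudoMetricSpace X]

def distSq (w : X) : C(X, ℝ) := ⟨fun z => dist z w ^ 2, by fun_prop⟩

@[simp] theorem distSq_apply (w z : X) : distSq w z = dist z w ^ 2 := rfl

theorem ContinuousMap.exists_abs_sub_le_add_mul_dist_sq [CompactSpace X] (g : C(X, ℝ)) {ε : ℝ}
    (hε : 0 < ε) : ∃ K, 0 ≤ K ∧ ∀ z w, |g z - g w| ≤ ε + K * dist z w ^ 2 := by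
  obtain ⟨δ, hδ, hg⟩ := Metric.uniformContinuous_iff.1
    (CompactSpace.uniformContinuous_of_continuous g.continuous) ε hε
  -- beyond distance `δ` the quadratic term alone dominates the oscillation `2 * ‖g‖`
  refine ⟨2 * ‖g‖ / δ ^ 2, by positivity, fun z w => ?_⟩
  rcases lt_or_ge (dist z w) δ with hzw | hzw
  · have := (hg hzw).le
    rw [Real.dist_eq] at this
    have : 0 ≤ 2 * ‖g‖ / δ ^ 2 * dist z w ^ 2 := by positivity
    linarith
  · have hbound : |g z - g w| ≤ 2 * ‖g‖ := by
      simpa [Real.dist_eq] using g.dist_le_two_norm z w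
    have : 2 * ‖g‖ ≤ 2 * ‖g‖ / δ ^ 2 * dist z w ^ 2 := by
      rw [div_mul_eq_mul_div, le_div_iff₀ (by positivity)]
      gcongr
    linarith

end Metric

local notation "𝔻" => Metric.closedBall (0 : ℂ) 1

theorem realToRCLike_distSq_eq (w : 𝔻) :
    (distSq w).realToRCLike ℂ = discAbsSqFun - starRingEnd ℂ w • discIdFun
      - (w : ℂ) • star discIdFun + ((w : ℂ) * starRingEnd ℂ w) • 1 := by
  ext z
  simp only [ContinuousMap.realToRCLike_apply, distSq_apply, Subtype.dist_eq, dist_eq_norm,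
    Complex.coe_algebraMap, Complex.ofReal_pow, ← Complex.mul_conj', map_sub, discAbsSqFun,
    discIdFun, ContinuousMap.add_apply, ContinuousMap.sub_apply, ContinuousMap.coe_mk,
    ContinuousMap.coe_smul, Pi.smul_apply, smul_eq_mul, ContinuousMap.coe_star, Pi.star_apply,
    RCLike.star_def, ContinuousMap.coe_one, Pi.one_apply, mul_one]
  ring

theorem PositiveLinearMap.norm_apply_distSq_le (φ : C(𝔻, ℂ) →ₚ[ℂ] ℂ) (w : 𝔻) :
    ‖φ ((distSq w).realToRCLike ℂ)‖ ≤ ‖φ discAbsSqFun - discAbsSqFun w‖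
      + 2 * ‖φ discIdFun - discIdFun w‖ + ‖φ 1 - 1‖ := by
  have hw : ‖(w : ℂ)‖ ≤ 1 := mem_closedBall_zero_iff.1 w.2
  set A := φ discAbsSqFun - discAbsSqFun w
  set B := φ discIdFun - discIdFun w
  set C := φ 1 - 1
  have hφ : φ ((distSq w).realToRCLike ℂ) =
      A - starRingEnd ℂ w * B - w * starRingEnd ℂ B + (w * starRingEnd ℂ w) * C := by
    rw [realToRCLike_distSq_eq, map_add, map_sub, map_sub, map_smul, map_smul, map_smul, map_star]
    simp only [discAbsSqFun, Complex.ofReal_pow, ← Complex.mul_conj', discIdFun, smul_eq_mul,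
      RCLike.star_def, ContinuousMap.coe_mk, map_sub, A, B, C]
    ring
  rw [hφ]
  calc _ ≤ ‖A‖ + ‖(w : ℂ)‖ * ‖B‖ + ‖(w : ℂ)‖ * ‖B‖ + ‖(w : ℂ)‖ * ‖(w : ℂ)‖ * ‖C‖ := by
        refine (norm_add_le _ _).trans (add_le_add ((norm_sub_le _ _).trans
          (add_le_add ((norm_sub_le _ _).trans (le_of_eq ?_)) (le_of_eq ?_))) (le_of_eq ?_)) <;>
        simp
    _ ≤ ‖A‖ + 1 * ‖B‖ + 1 * ‖B‖ + 1 * 1 * ‖C‖ := by gcongr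
    _ = _ := by ring

theorem PositiveLinearMap.norm_apply_realToRCLike_sub_self_le (L : C(𝔻, ℂ) →ₚ[ℂ] C(𝔻, ℂ))
    (g : C(𝔻, ℝ)) {ε K : ℝ} (hε : 0 ≤ ε) (hK : 0 ≤ K)
    (hg : ∀ z w, |g z - g w| ≤ ε + K * dist z w ^ 2) :
    ‖L (g.realToRCLike ℂ) - g.realToRCLike ℂ‖ ≤ ε + (ε + ‖g‖ + 2 * K) *
      (‖L 1 - 1‖ + ‖L discIdFun - discIdFun‖ + ‖L discAbsSqFun - discAbsSqFun‖) := by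
  refine (ContinuousMap.norm_le _ (by positivity)).2 fun w => ?_
  let φ : C(𝔻, ℂ) →ₚ[ℂ] ℂ := PositiveLinearMap.mk₀
    ((ContinuousMap.evalCLM ℂ w).toLinearMap ∘ₗ L.toLinearMap) fun f hf => L.map_nonneg hf w
  have key := φ.norm_apply_realToRCLike_sub_le hε hK (q := distSq w) (hg · w)
  have hq := φ.norm_apply_distSq_le w
  have ha : ‖φ 1 - 1‖ ≤ ‖L 1 - 1‖ := (L 1 - 1).norm_coe_le_norm w
  have hc : ‖φ discIdFun - discIdFun w‖ ≤ ‖L discIdFun - discIdFun‖ :=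
    (L discIdFun - discIdFun).norm_coe_le_norm w
  have hd : ‖φ discAbsSqFun - discAbsSqFun w‖ ≤ ‖L discAbsSqFun - discAbsSqFun‖ :=
    (L discAbsSqFun - discAbsSqFun).norm_coe_le_norm w
  have hgw : |g w| ≤ ‖g‖ := by simpa using g.norm_coe_le_norm w
  calc ‖(L (g.realToRCLike ℂ) - g.realToRCLike ℂ) w‖ = ‖φ (g.realToRCLike ℂ) - g w‖ := rfl
    _ ≤ ε + (ε + ‖g‖) * ‖L 1 - 1‖ + K * (‖L discAbsSqFun - discAbsSqFun‖
          + 2 * ‖L discIdFun - discIdFun‖ + ‖L 1 - 1‖) := by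
        refine key.trans ?_
        gcongr
        exact hq.trans (by gcongr)
    _ ≤ _ := by
        have := norm_nonneg (L 1 - 1)
        have := norm_nonneg (L discIdFun - discIdFun)
        have := norm_nonneg (L discAbsSqFun - discAbsSqFun)
        have := norm_nonneg g
        nlinarith

/-- Complex Korovkin theorem on the closed unit disc `D = {z ∈ ℂ : |z| ≤ 1}`: if a sequence
of positive linear maps on `C(D)` converges uniformly to the identity on `1`, `z` and `|z|²`,
then it converges uniformly to the identity on all of `C(D)`. -/
theorem korovkin_disc
    (T : ℕ → (C(↥(Metric.closedBall (0 : ℂ) 1), ℂ) →ₗ[ℂ]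
      C(↥(Metric.closedBall (0 : ℂ) 1), ℂ)))
    (hpos : ∀ n, ∀ f : C(↥(Metric.closedBall (0 : ℂ) 1), ℂ),
      (∀ z, (f z).im = 0 ∧ 0 ≤ (f z).re) →
      ∀ z, ((T n f) z).im = 0 ∧ 0 ≤ ((T n f) z).re)
    (h1 : Tendsto (fun n => ‖T n 1 - 1‖) atTop (nhds 0))
    (hz : Tendsto (fun n => ‖T n discIdFun - discIdFun‖) atTop (nhds 0))
    (habs : Tendsto (fun n => ‖T n discAbsSqFun - discAbsSqFun‖) atTop (nhds 0)) :
    ∀ f : C(↥(Metric.closedBall (0 : ℂ) 1), ℂ),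
      Tendsto (fun n => ‖T n f - f‖) atTop (nhds 0) := by
  let S n : C(𝔻, ℂ) →ₚ[ℂ] C(𝔻, ℂ) := PositiveLinearMap.mk₀ (T n) fun f hf =>
    ContinuousMap.complex_nonneg_iff.2 (hpos n f (ContinuousMap.complex_nonneg_iff.1 hf))
  have he : Tendsto (fun n => ‖T n 1 - 1‖ + ‖T n discIdFun - discIdFun‖
      + ‖T n discAbsSqFun - discAbsSqFun‖) atTop (𝓝 0) := by
    simpa using (h1.add hz).add habs
  refine tendsto_norm_sub_of_forall_isSelfAdjoint T fun f hf => ?_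
  rw [← ContinuousMap.IsSelfAdjoint.realToRCLike_rclikeToReal hf]
  refine .of_forall_le_add_mul (fun n => norm_nonneg _) he fun ε hε => ?_
  obtain ⟨K, hK, hg⟩ := f.rclikeToReal.exists_abs_sub_le_add_mul_dist_sq hε
  exact ⟨_, fun n => (S n).norm_apply_realToRCLike_sub_self_le _ hε.le hK hg⟩
end
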